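/- Let Y be a finite type, π_ref a strictly positive probability mass function on Y, r : Y → ℝ injective, N ≥ 2, and π : ℝ → Y → ℝ a family of probability mass functions on Y such that for each y the map θ ↦ π(θ)(y) is differentiable and strictly positive, with Σ_y π(θ)(y) = 1 for all θ. Define r_BOND(y) = log p_≤(y) + (1/(N−1)) · log Σ_{i=1}^{N} (p_<(y)/p_≤(y))^(i−1) and β_BOND = 1/(N−1). Then (d/dθ) KL(π(θ) ‖ π_BoN) = −(N−1) · Σ_{y ∈ Y} π(θ)(y) · ((d/dθ) log π(θ)(y)) · (r_BOND(y) − β_BOND · (log π(θ)(y) − log π_ref(y))); i.e., the backward-KL gradient coincides (up to the factor N−1) with the policy gradient of the KL-regularized RLHF objective with reward r_BOND and regularization strength β_BOND. -/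

import Mathlib

open scoped Classical

/-- `pLt pref r y` is the probability under `pref` that a sample has strictly smaller reward. -/
noncomputable def pLt {Y : Type*} [Fintype Y] (pref : Y → ℝ) (r : Y → ℝ) (y : Y) : ℝ :=
  ∑ y' ∈ Finset.univ.filter (fun y' => r y' < r y), pref y'

/-- `pLe pref r y` is the probability under `pref` that a sample has reward not larger. -/
noncomputable def pLe {Y : Type*} [Fintype Y] (pref : Y → ℝ) (r : Y → ℝ) (y : Y) : ℝ :=
  ∑ y' ∈ Finset.univ.filter (fun y' => r y' ≤ r y), pref y'

/-- The Best-of-N selection of the tuple `t` is `y`: the smallest index `i` among the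
argmax indices of `r ∘ t` satisfies `t i = y`. -/
def IsBoNSelection {Y : Type*} (r : Y → ℝ) {N : ℕ} (t : Fin N → Y) (y : Y) : Prop :=
  ∃ i : Fin N, (∀ j, r (t j) ≤ r (t i)) ∧
    (∀ i' : Fin N, (∀ j, r (t j) ≤ r (t i')) → i ≤ i') ∧ t i = y

/-- The Best-of-N distribution: probability that sampling `N` i.i.d. points from `pref`
and selecting the best one yields `y`. -/
noncomputable def piBoN {Y : Type*} [Fintype Y] (pref : Y → ℝ) (r : Y → ℝ) (N : ℕ) (y : Y) : ℝ :=
  ∑ t : Fin N → Y, if IsBoNSelection r t y then ∏ j, pref (t j) else 0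

/-! Since `r` is injective, the best of `N` samples is `y` exactly when every sample has reward
at most `r y` but not every sample has reward below `r y`; hence
`π_BoN(y) = p_≤(y)^N - p_<(y)^N = π_ref(y) p_≤(y)^(N-1) Σ_{i<N} (p_</p_≤)^i`, i.e.
`log π_BoN = log π_ref + (N-1) r_BOND`. As `Σ_y π(θ)(y) = 1`, the score `∂_θ log π(θ)` has mean
zero under `π(θ)`, so `∂_θ KL(π(θ) ‖ q) = Σ_y π(θ)(y) ∂_θ log π(θ)(y) (log π(θ)(y) - log q(y))`,
and substituting `q = π_BoN` gives the claim. -/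

lemma mul_pow_sub_pow_eq_geom_sum {K : Type*} [Field K] {a b : K} (hb : b ≠ 0) (n : ℕ) :
    b * (b ^ n - a ^ n) = (b - a) * b ^ n * ∑ i ∈ Finset.range n, (a / b) ^ i := by
  have hgeom := geom_sum_mul (a / b) n
  rw [div_pow, div_sub_one hb, div_sub_one (pow_ne_zero n hb)] at hgeom
  field_simp at hgeom
  linear_combination hgeom

lemma isBoNSelection_iff {Y : Type*} {r : Y → ℝ} (hr : Function.Injective r) {N : ℕ}
    (t : Fin N → Y) (y : Y) : IsBoNSelection r t y ↔ (∀ j, r (t j) ≤ r y) ∧ ∃ j, t j = y := by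
  constructor
  · rintro ⟨i, hmax, -, rfl⟩
    exact ⟨hmax, i, rfl⟩
  · rintro ⟨hle, j, hj⟩
    have hne : (Finset.univ.filter (fun i => t i = y)).Nonempty := ⟨j, by simp [hj]⟩
    have hfirst : t ((Finset.univ.filter (fun i => t i = y)).min' hne) = y := by
      simpa using Finset.min'_mem _ hne
    refine ⟨_, fun k => by rw [hfirst]; exact hle k, fun i' hi' => Finset.min'_le _ _ ?_, hfirst⟩
    simpa using hr (le_antisymm (hle i') (hj ▸ hi' j))

section BestOfN

variable {Y : Type*} [Fintype Y]

lemma sum_ite_forall_mem_prod_eq_pow {ι R : Type*} [Fintype ι] [CommSemiring R] (f : Y → R)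
    (s : Finset Y) :
    (∑ t : ι → Y, if ∀ j, t j ∈ s then ∏ j, f (t j) else 0) = (∑ y ∈ s, f y) ^ Fintype.card ι := by
  rw [← Finset.sum_filter, ← Finset.card_univ, ← Finset.prod_const, Finset.prod_univ_sum]
  congr 1
  ext t
  simp [Fintype.mem_piFinset]

lemma piBoN_eq_pLe_pow_sub_pLt_pow (pref : Y → ℝ) {r : Y → ℝ} (hr : Function.Injective r)
    (N : ℕ) (y : Y) : piBoN pref r N y = pLe pref r y ^ N - pLt pref r y ^ N := by
  have hsplit : ∀ t : Fin N → Y, (if IsBoNSelection r t y then ∏ j, pref (t j) else 0) =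
      (if ∀ j, t j ∈ Finset.univ.filter (fun y' => r y' ≤ r y) then ∏ j, pref (t j) else 0) -
        (if ∀ j, t j ∈ Finset.univ.filter (fun y' => r y' < r y) then ∏ j, pref (t j) else 0) := by
    intro t
    have hlt_iff : (∀ j, r (t j) < r y) ↔ (∀ j, r (t j) ≤ r y) ∧ ¬ ∃ j, t j = y := by
      refine ⟨fun h => ⟨fun j => (h j).le, fun ⟨j, hj⟩ => (h j).ne (congrArg r hj)⟩, ?_⟩
      rintro ⟨hle, hne⟩ j
      exact (hle j).lt_of_ne fun h => hne ⟨j, hr h⟩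
    simp only [Finset.mem_filter, Finset.mem_univ, true_and, isBoNSelection_iff hr, hlt_iff]
    split_ifs <;> simp_all
  unfold piBoN pLe pLt
  rw [Finset.sum_congr rfl (fun t _ => hsplit t), Finset.sum_sub_distrib]
  congr 1
  · convert sum_ite_forall_mem_prod_eq_pow (ι := Fin N) pref
      (Finset.univ.filter fun y' => r y' ≤ r y)
    simp
  · convert sum_ite_forall_mem_prod_eq_pow (ι := Fin N) pref
      (Finset.univ.filter fun y' => r y' < r y)
    simp

lemma pLe_eq_add_pLt (pref : Y → ℝ) {r : Y → ℝ} (hr : Function.Injective r) (y : Y) :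
    pLe pref r y = pref y + pLt pref r y := by
  have hle : Finset.univ.filter (fun y' => r y' ≤ r y) =
      insert y (Finset.univ.filter fun y' => r y' < r y) := by
    ext y'
    simp only [Finset.mem_filter, Finset.mem_insert, Finset.mem_univ, true_and]
    exact ⟨fun h => h.eq_or_lt.imp_left (hr ·), by rintro (rfl | h); exacts [le_rfl, h.le]⟩
  rw [pLe, pLt, hle, Finset.sum_insert (by simp)]

lemma pLt_nonneg {pref : Y → ℝ} (hpos : ∀ y, 0 < pref y) (r : Y → ℝ) (y : Y) :
    0 ≤ pLt pref r y :=
  Finset.sum_nonneg fun y' _ => (hpos y').le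

lemma pLe_pos {pref : Y → ℝ} (hpos : ∀ y, 0 < pref y) {r : Y → ℝ} (hr : Function.Injective r)
    (y : Y) : 0 < pLe pref r y := by
  rw [pLe_eq_add_pLt pref hr]
  exact add_pos_of_pos_of_nonneg (hpos y) (pLt_nonneg hpos r y)

lemma piBoN_eq_mul_geom_sum {pref : Y → ℝ} (hpos : ∀ y, 0 < pref y)
    {r : Y → ℝ} (hr : Function.Injective r) (N : ℕ) (y : Y) :
    piBoN pref r N y = pref y * pLe pref r y ^ N *
      (∑ i ∈ Finset.range N, (pLt pref r y / pLe pref r y) ^ i) / pLe pref r y := by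
  have hb := (pLe_pos hpos hr y).ne'
  rw [eq_div_iff hb, mul_comm, piBoN_eq_pLe_pow_sub_pLt_pow pref hr, mul_pow_sub_pow_eq_geom_sum hb,
    sub_eq_of_eq_add (pLe_eq_add_pLt pref hr y)]

lemma log_piBoN {pref : Y → ℝ} (hpos : ∀ y, 0 < pref y) {r : Y → ℝ}
    (hr : Function.Injective r) {N : ℕ} (hN : 0 < N) (y : Y) :
    Real.log (piBoN pref r N y) = Real.log (pref y) + ((N : ℝ) - 1) * Real.log (pLe pref r y) +
      Real.log (∑ i ∈ Finset.range N, (pLt pref r y / pLe pref r y) ^ i) := by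
  have ha := pLt_nonneg hpos r y
  have hb := pLe_pos hpos hr y
  have hT : 0 < ∑ i ∈ Finset.range N, (pLt pref r y / pLe pref r y) ^ i :=
    Finset.sum_pos' (fun i _ => by positivity) ⟨0, by simpa using hN, by simp⟩
  have hp := hpos y
  rw [piBoN_eq_mul_geom_sum hpos hr, Real.log_div (by positivity) hb.ne',
    Real.log_mul (by positivity) hT.ne', Real.log_mul hp.ne' (by positivity), Real.log_pow]
  ring

lemma hasDerivAt_sum_mul_log_sub_log {π : ℝ → Y → ℝ} {c : ℝ}
    (q : Y → ℝ) {θ : ℝ} (hdiff : ∀ y, DifferentiableAt ℝ (fun θ => π θ y) θ)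
    (hne : ∀ y, π θ y ≠ 0) (hsum : ∀ θ, ∑ y, π θ y = c) :
    HasDerivAt (fun θ => ∑ y, π θ y * (Real.log (π θ y) - Real.log (q y)))
      (∑ y, π θ y * deriv (fun θ => Real.log (π θ y)) θ *
        (Real.log (π θ y) - Real.log (q y))) θ := by
  have hlog y : HasDerivAt (fun θ => Real.log (π θ y)) (deriv (fun θ => Real.log (π θ y)) θ) θ :=
    ((hdiff y).log (hne y)).hasDerivAt
  have hscore y : HasDerivAt (fun θ => π θ y) (π θ y * deriv (fun θ => Real.log (π θ y)) θ) θ := by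
    have h := (hdiff y).hasDerivAt
    rwa [(h.log (hne y)).deriv, mul_div_cancel₀ _ (hne y)]
  have hscore_sum : ∑ y, π θ y * deriv (fun θ => Real.log (π θ y)) θ = 0 := by
    have h := HasDerivAt.fun_sum fun y (_ : y ∈ Finset.univ) => hscore y
    rw [show (fun θ => ∑ y, π θ y) = fun _ => c from funext hsum] at h
    exact h.unique (hasDerivAt_const θ c)
  have hterm y : HasDerivAt (fun θ => π θ y * (Real.log (π θ y) - Real.log (q y)))
      (π θ y * deriv (fun θ => Real.log (π θ y)) θ * (Real.log (π θ y) - Real.log (q y)) +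
        π θ y * deriv (fun θ => Real.log (π θ y)) θ) θ :=
    (hscore y).fun_mul ((hlog y).sub_const _)
  refine (HasDerivAt.fun_sum fun y (_ : y ∈ Finset.univ) => hterm y).congr_deriv ?_
  rw [Finset.sum_add_distrib, hscore_sum, add_zero]

end BestOfN

theorem backward_kl_is_policy_gradient_general {Y : Type*} [Fintype Y]
    (pref : Y → ℝ) (hpos : ∀ y, 0 < pref y)
    (r : Y → ℝ) (hr : Function.Injective r)
    (N : ℕ) (hN : 2 ≤ N)
    (π : ℝ → Y → ℝ)
    (hπpos : ∀ θ y, 0 < π θ y)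
    (hπdiff : ∀ y, Differentiable ℝ (fun θ => π θ y))
    (hπsum : ∀ θ, ∑ y, π θ y = 1)
    (rBOND : Y → ℝ)
    (hrBOND : ∀ y, rBOND y = Real.log (pLe pref r y) +
      (1 / ((N : ℝ) - 1)) *
        Real.log (∑ i ∈ Finset.range N, (pLt pref r y / pLe pref r y) ^ i))
    (βBOND : ℝ) (hβ : βBOND = 1 / ((N : ℝ) - 1)) :
    ∀ θ : ℝ,
      HasDerivAt (fun θ' => ∑ y, π θ' y * (Real.log (π θ' y) - Real.log (piBoN pref r N y)))
        (-((N : ℝ) - 1) *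
          ∑ y, π θ y * deriv (fun θ' => Real.log (π θ' y)) θ *
            (rBOND y - βBOND * (Real.log (π θ y) - Real.log (pref y)))) θ := by
  intro θ
  have hN1 : (N : ℝ) - 1 ≠ 0 := by
    have : (2 : ℝ) ≤ N := by exact_mod_cast hN
    linarith
  convert hasDerivAt_sum_mul_log_sub_log (piBoN pref r N) (fun y => (hπdiff y) θ)
    (fun y => (hπpos θ y).ne') hπsum using 1
  rw [Finset.mul_sum]
  refine Finset.sum_congr rfl fun y _ => ?_
  rw [log_piBoN hpos hr (by omega), hrBOND, hβ]
  field_simp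
  ring

/-- The gradient of the backward KL divergence from the Best-of-N distribution coincides
(up to the factor `N−1`) with the policy gradient of the KL-regularized RLHF objective with
the BOND reward `r_BOND(y) = log p_≤(y) + (1/(N−1)) log Σ_{i=1}^N (p_<(y)/p_≤(y))^(i−1)`
and regularization strength `β_BOND = 1/(N−1)`:
`(d/dθ) KL(π(θ) ‖ π_BoN) =
  −(N−1) Σ_y π(θ)(y) ((d/dθ) log π(θ)(y)) (r_BOND(y) − β_BOND (log π(θ)(y) − log π_ref(y)))`. -/
theorem backward_kl_is_policy_gradient {Y : Type*} [Fintype Y]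
    (pref : Y → ℝ) (hpos : ∀ y, 0 < pref y) (hsum : ∑ y, pref y = 1)
    (r : Y → ℝ) (hr : Function.Injective r)
    (N : ℕ) (hN : 2 ≤ N)
    (π : ℝ → Y → ℝ)
    (hπpos : ∀ θ y, 0 < π θ y)
    (hπdiff : ∀ y, Differentiable ℝ (fun θ => π θ y))
    (hπsum : ∀ θ, ∑ y, π θ y = 1)
    (rBOND : Y → ℝ)
    (hrBOND : ∀ y, rBOND y = Real.log (pLe pref r y) +
      (1 / ((N : ℝ) - 1)) *
        Real.log (∑ i ∈ Finset.range N, (pLt pref r y / pLe pref r y) ^ i))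
    (βBOND : ℝ) (hβ : βBOND = 1 / ((N : ℝ) - 1)) :
    ∀ θ : ℝ,
      HasDerivAt (fun θ' => ∑ y, π θ' y * (Real.log (π θ' y) - Real.log (piBoN pref r N y)))
        (-((N : ℝ) - 1) *
          ∑ y, π θ y * deriv (fun θ' => Real.log (π θ' y)) θ *
            (rBOND y - βBOND * (Real.log (π θ y) - Real.log (pref y)))) θ :=
  backward_kl_is_policy_gradient_general pref hpos r hr N hN π hπpos hπdiff hπsum rBOND hrBOND βBOND
    hβ
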